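/- arXiv:2301.06649 — 5 statements merged into one kernel-verified Lean document; each statement's English description precedes it below -/
import Mathlib

section
/- Let p, q, p', q' be points in the plane with ||p-q|| + ||p'-q'|| ≥ ||p-q'|| + ||p'-q||. Then the disks with diameters pq and p'q' have a common point. -/
/-!
The centres of the two disks are the midpoints of `pq` and `p'q'`. Pairing `p` with `q'` and
`q` with `p'`, the triangle inequality puts them at distance at most `(‖p - q'‖ + ‖p' - q‖) / 2`,
which by hypothesis is at most the sum `‖p - q‖ / 2 + ‖p' - q'‖ / 2` of the radii. In a real
normed space two closed balls whose centres are no farther apart than the sum of the radii meet.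
-/

theorem exists_mem_closedBall_midpoint_inter_closedBall_midpoint {E : Type*}
    [SeminormedAddCommGroup E] [NormedSpace ℝ E] {p q p' q' : E}
    (h : dist p q' + dist p' q ≤ dist p q + dist p' q') :
    ∃ x, dist x (midpoint ℝ p q) ≤ dist p q / 2 ∧ dist x (midpoint ℝ p' q') ≤ dist p' q' / 2 := by
  have hcentres : dist (midpoint ℝ p q) (midpoint ℝ p' q') ≤ dist p' q' / 2 + dist p q / 2 :=
    calc dist (midpoint ℝ p q) (midpoint ℝ p' q')
        = dist (midpoint ℝ p q) (midpoint ℝ q' p') := by rw [midpoint_comm p' q']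
      _ ≤ (dist p q' + dist q p') / 2 := dist_midpoint_midpoint_le p q q' p'
      _ ≤ dist p' q' / 2 + dist p q / 2 := by rw [dist_comm q p']; linarith
  obtain ⟨x, hx, hx'⟩ := exists_dist_le_le (by positivity) (by positivity) hcentres
  exact ⟨x, by rwa [dist_comm], hx'⟩

theorem disks_intersect_of_maxsum_pair
    (p q p' q' : EuclideanSpace ℝ (Fin 2))
    (h : ‖p - q'‖ + ‖p' - q‖ ≤ ‖p - q‖ + ‖p' - q'‖) :
    ∃ x : EuclideanSpace ℝ (Fin 2),
      ‖x - (1/2 : ℝ) • (p + q)‖ ≤ ‖p - q‖ / 2 ∧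
      ‖x - (1/2 : ℝ) • (p' + q')‖ ≤ ‖p' - q'‖ / 2 := by
  simp only [← dist_eq_norm] at h ⊢
  have hmid (a b : EuclideanSpace ℝ (Fin 2)) : (1/2 : ℝ) • (a + b) = midpoint ℝ a b := by
    rw [midpoint_eq_smul_add, invOf_eq_inv, one_div]
  simp only [hmid]
  exact exists_mem_closedBall_midpoint_inter_closedBall_midpoint h
end

section
/- Let R and B be disjoint sets of n points each in the plane, and let M = {(rᵢ,bᵢ) : i = 1,…,n} be a perfect matching maximizing ∑ᵢ ||rᵢ - bᵢ||. Then for every pair i, j, the elliptical regions E(rᵢbᵢ) and E(rⱼbⱼ) with foci at the matched points and major axis √2 times the distance between the foci have a common point. -/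
/-!
Exchanging the partners of `rᵢ` and `rⱼ` cannot increase the total length of a max-sum
matching, so `‖rᵢ - bⱼ‖ + ‖rⱼ - bᵢ‖ ≤ ‖rᵢ - bᵢ‖ + ‖rⱼ - bⱼ‖`. The midpoints of `rᵢbᵢ` and `rⱼbⱼ` are
therefore at most half this sum apart, so the disks with diameters `rᵢbᵢ` and `rⱼbⱼ` meet.
By Apollonius' theorem each such disk lies in the corresponding ellipse.
-/

open Finset

theorem add_le_add_of_forall_sum_perm_le {ι M : Type*} [Fintype ι] [DecidableEq ι]
    [AddCommGroup M] [PartialOrder M] [IsOrderedAddMonoid M] (f : ι → ι → M)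
    (h : ∀ σ : Equiv.Perm ι, ∑ k, f k (σ k) ≤ ∑ k, f k k) (i j : ι) :
    f i j + f j i ≤ f i i + f j j := by
  rcases eq_or_ne i j with rfl | hij
  · rfl
  have hgain :
      ∑ k : ι, (f k (Equiv.swap i j k) - f k k) = (f i j - f i i) + (f j i - f j j) := by
    rw [Fintype.sum_eq_add i j hij
        fun k hk => by rw [Equiv.swap_apply_of_ne_of_ne hk.1 hk.2, sub_self],
      Equiv.swap_apply_left, Equiv.swap_apply_right]
  have hswap := h (Equiv.swap i j)
  rw [← sub_nonpos, ← sum_sub_distrib, hgain] at hswap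
  rw [← sub_nonpos]
  convert hswap using 1
  abel

theorem norm_sub_add_norm_sub_le_sqrt_two_mul_of_mem_closedBall_midpoint {E : Type*}
    [NormedAddCommGroup E] [InnerProductSpace ℝ E] {p q x : E}
    (hx : x ∈ Metric.closedBall (midpoint ℝ p q) (‖p - q‖ / 2)) :
    ‖p - x‖ + ‖q - x‖ ≤ Real.sqrt 2 * ‖p - q‖ := by
  rw [Metric.mem_closedBall, dist_comm] at hx
  have hsq : ‖p - x‖ ^ 2 + ‖q - x‖ ^ 2 ≤ ‖p - q‖ ^ 2 := by
    have := EuclideanGeometry.dist_sq_add_dist_sq_eq_two_mul_dist_midpoint_sq_add_half_dist_sq x p q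
    simp only [dist_eq_norm, norm_sub_rev x] at this hx
    nlinarith [pow_le_pow_left₀ (norm_nonneg _) hx 2]
  refine le_of_pow_le_pow_left₀ two_ne_zero (by positivity) ?_
  rw [mul_pow, Real.sq_sqrt zero_le_two]
  nlinarith [sq_nonneg (‖p - x‖ - ‖q - x‖)]

theorem ellipses_pairwise_intersect_of_maxsum_general
    (n : ℕ) (r b : Fin n → EuclideanSpace ℝ (Fin 2))
    (hmax : ∀ σ : Equiv.Perm (Fin n),
      ∑ i : Fin n, ‖r i - b (σ i)‖ ≤ ∑ i : Fin n, ‖r i - b i‖)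
    (i j : Fin n) :
    ∃ x : EuclideanSpace ℝ (Fin 2),
      ‖r i - x‖ + ‖b i - x‖ ≤ Real.sqrt 2 * ‖r i - b i‖ ∧
      ‖r j - x‖ + ‖b j - x‖ ≤ Real.sqrt 2 * ‖r j - b j‖ := by
  have hswap := add_le_add_of_forall_sum_perm_le (fun k l => ‖r k - b l‖) hmax i j
  have hmid : dist (midpoint ℝ (r i) (b i)) (midpoint ℝ (r j) (b j)) ≤
      ‖r j - b j‖ / 2 + ‖r i - b i‖ / 2 :=
    calc _ ≤ (dist (r i) (b j) + dist (b i) (r j)) / 2 := by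
          rw [midpoint_comm (r j)]; exact dist_midpoint_midpoint_le _ _ _ _
      _ ≤ _ := by rw [dist_eq_norm, dist_eq_norm, norm_sub_rev (b i)]; linarith
  obtain ⟨x, hxi, hxj⟩ := exists_dist_le_le (by positivity) (by positivity) hmid
  exact ⟨x,
    norm_sub_add_norm_sub_le_sqrt_two_mul_of_mem_closedBall_midpoint
      (Metric.mem_closedBall.2 (by rwa [dist_comm])),
    norm_sub_add_norm_sub_le_sqrt_two_mul_of_mem_closedBall_midpoint hxj⟩

theorem ellipses_pairwise_intersect_of_maxsum
    (n : ℕ) (r b : Fin n → EuclideanSpace ℝ (Fin 2))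
    (hr : Function.Injective r) (hb : Function.Injective b)
    (hdisj : Disjoint (Set.range r) (Set.range b))
    (hmax : ∀ σ : Equiv.Perm (Fin n),
      ∑ i : Fin n, ‖r i - b (σ i)‖ ≤ ∑ i : Fin n, ‖r i - b i‖)
    (i j : Fin n) :
    ∃ x : EuclideanSpace ℝ (Fin 2),
      ‖r i - x‖ + ‖b i - x‖ ≤ Real.sqrt 2 * ‖r i - b i‖ ∧
      ‖r j - x‖ + ‖b j - x‖ ≤ Real.sqrt 2 * ‖r j - b j‖ :=
  ellipses_pairwise_intersect_of_maxsum_general n r b hmax i j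
end

section
/- Let R = {a, b} and B = {a', b'} be the vertices of a square such that a, b are opposite vertices (one diagonal) and a', b' are opposite vertices (the other diagonal). Then the matching {(a,a'), (b,b')} is a max-sum matching of R with B, and the center of the square is the unique common point of E(aa') and E(bb'); in particular, the constant √2 in the bound ||r-o|| + ||b-o|| ≤ √2·||r-b|| cannot be improved. -/
open scoped InnerProductSpace


private lemma factor_aux {t c d : ℝ} (h : t ^ 2 = c ^ 2 * d ^ 2) :
    t = c * d ∨ t = -(c * d) := by
  have h0 : (t - c * d) * (t + c * d) = 0 := by nlinarith [h]
  rcases mul_eq_zero.mp h0 with h1 | h1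
  · left; linarith
  · right; linarith

private lemma dzero_aux {c d : ℝ} (hc : 0 < c) (hd : 0 ≤ d)
    (h : (0:ℝ) = c ^ 2 * d ^ 2) : d = 0 := by
  by_contra hd0
  have hdpos : 0 < d := lt_of_le_of_ne hd (Ne.symm hd0)
  have := mul_pos (pow_pos hc 2) (pow_pos hdpos 2)
  linarith

private lemma sq_inner_aux {A B c d t : ℝ} (hA : A ^ 2 = c ^ 2 - 2 * t + d ^ 2)
    (hB : B ^ 2 = c ^ 2 + 2 * t + d ^ 2) (hAn : 0 ≤ A) (hBn : 0 ≤ B)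
    (hsum : A + B = 2 * c) : t ^ 2 = c ^ 2 * d ^ 2 := by
  have h4 : (A + B) ^ 2 = 4 * c ^ 2 := by rw [hsum]; ring
  have hAB : A * B = c ^ 2 - d ^ 2 := by nlinarith [h4, hA, hB]
  have h5 : (c ^ 2 - 2 * t + d ^ 2) * (c ^ 2 + 2 * t + d ^ 2) = (c ^ 2 - d ^ 2) ^ 2 := by
    rw [← hA, ← hB, ← mul_pow, hAB]
  nlinarith [h5]

theorem square_tight_example
    (o u v : EuclideanSpace ℝ (Fin 2)) (hu : u ≠ 0) (huv : ‖u‖ = ‖v‖)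
    (horth : ⟪u, v⟫_ℝ = 0)
    (a b a' b' : EuclideanSpace ℝ (Fin 2))
    (ha : a = o + u) (hb : b = o - u) (ha' : a' = o + v) (hb' : b' = o - v) :
    (‖a - b'‖ + ‖b - a'‖ ≤ ‖a - a'‖ + ‖b - b'‖) ∧
    ({x : EuclideanSpace ℝ (Fin 2) | ‖a - x‖ + ‖a' - x‖ ≤ Real.sqrt 2 * ‖a - a'‖} ∩
      {x : EuclideanSpace ℝ (Fin 2) | ‖b - x‖ + ‖b' - x‖ ≤ Real.sqrt 2 * ‖b - b'‖} = {o}) := by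
  subst ha hb ha' hb'
  have hupos : (0:ℝ) < ‖u‖ := norm_pos_iff.mpr hu
  -- all four side norms equal √2‖u‖
  have key : ∀ x y : EuclideanSpace ℝ (Fin 2), ‖x‖ = ‖u‖ → ‖y‖ = ‖u‖ → ⟪x, y⟫_ℝ = 0 →
      ‖x - y‖ = Real.sqrt 2 * ‖u‖ := by
    intro x y hx hy hxy
    have h2 : ‖x - y‖ ^ 2 = 2 * ‖u‖ ^ 2 := by
      rw [norm_sub_sq_real, hx, hy, hxy]; ring
    have : ‖x - y‖ = Real.sqrt (2 * ‖u‖ ^ 2) := by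
      rw [← h2, Real.sqrt_sq (norm_nonneg _)]
    rw [this, Real.sqrt_mul (by norm_num), Real.sqrt_sq (norm_nonneg _)]
  have e1 : (o + u) - (o - v) = u - (-v) := by abel
  have e2 : (o - u) - (o + v) = (-u) - v := by abel
  have e3 : (o + u) - (o + v) = u - v := by abel
  have e4 : (o - u) - (o - v) = (-u) - (-v) := by abel
  have n1 : ‖(o + u) - (o - v)‖ = Real.sqrt 2 * ‖u‖ := by
    rw [e1]; exact key u (-v) rfl (by rw [norm_neg, ← huv]) (by simp [horth])
  have n2 : ‖(o - u) - (o + v)‖ = Real.sqrt 2 * ‖u‖ := by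
    rw [e2]; exact key (-u) v (by rw [norm_neg]) huv.symm (by simp [horth])
  have n3 : ‖(o + u) - (o + v)‖ = Real.sqrt 2 * ‖u‖ := by
    rw [e3]; exact key u v rfl huv.symm horth
  have n4 : ‖(o - u) - (o - v)‖ = Real.sqrt 2 * ‖u‖ := by
    rw [e4]; exact key (-u) (-v) (by rw [norm_neg]) (by rw [norm_neg, ← huv]) (by simp [horth])
  have hs2 : Real.sqrt 2 * (Real.sqrt 2 * ‖u‖) = 2 * ‖u‖ := by
    rw [← mul_assoc, Real.mul_self_sqrt (by norm_num)]
  constructor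
  · rw [n1, n2, n3, n4]
  · ext x
    simp only [Set.mem_inter_iff, Set.mem_setOf_eq, Set.mem_singleton_iff, n3, n4, hs2]
    constructor
    · rintro ⟨h1, h2⟩
      set w : EuclideanSpace ℝ (Fin 2) := x - o with hw
      have f1 : (o + u) - x = u - w := by rw [hw]; abel
      have f2 : (o + v) - x = v - w := by rw [hw]; abel
      have f3 : (o - u) - x = -(u + w) := by rw [hw]; abel
      have f4 : (o - v) - x = -(v + w) := by rw [hw]; abel
      rw [f1, f2] at h1
      rw [f3, f4, norm_neg, norm_neg] at h2
      have tri_u : 2 * ‖u‖ ≤ ‖u - w‖ + ‖u + w‖ := by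
        have := norm_add_le (u - w) (u + w)
        have e : (u - w) + (u + w) = (2:ℝ) • u := by
          rw [two_smul]; abel
        rw [e, norm_smul] at this
        simpa using this
      have tri_v : 2 * ‖u‖ ≤ ‖v - w‖ + ‖v + w‖ := by
        have := norm_add_le (v - w) (v + w)
        have e : (v - w) + (v + w) = (2:ℝ) • v := by
          rw [two_smul]; abel
        rw [e, norm_smul] at this
        simp only [Real.norm_ofNat] at this
        rw [← huv] at this
        linarith
      have hequ : ‖u - w‖ + ‖u + w‖ = 2 * ‖u‖ := by linarith
      have heqv : ‖v - w‖ + ‖v + w‖ = 2 * ‖u‖ := by linarith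
      have sq_of : ∀ z : EuclideanSpace ℝ (Fin 2), ‖z‖ = ‖u‖ →
          ‖z - w‖ + ‖z + w‖ = 2 * ‖u‖ → ⟪z, w⟫_ℝ ^ 2 = ‖u‖ ^ 2 * ‖w‖ ^ 2 := by
        intro z hz hsum
        have hA : ‖z - w‖ ^ 2 = ‖u‖ ^ 2 - 2 * ⟪z, w⟫_ℝ + ‖w‖ ^ 2 := by
          rw [norm_sub_sq_real, hz]
        have hB : ‖z + w‖ ^ 2 = ‖u‖ ^ 2 + 2 * ⟪z, w⟫_ℝ + ‖w‖ ^ 2 := by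
          rw [norm_add_sq_real, hz]
        exact sq_inner_aux hA hB (norm_nonneg _) (norm_nonneg _) hsum
      have squ := sq_of u rfl hequ
      have sqv := sq_of v huv.symm heqv
      -- from squ, w is parallel to u, hence ⟪v,w⟫ = 0
      have hvw : ⟪v, w⟫_ℝ = 0 := by
        have hcases : ⟪u, w⟫_ℝ = ‖u‖ * ‖w‖ ∨ ⟪u, w⟫_ℝ = -(‖u‖ * ‖w‖) := by
          exact factor_aux squ
        rcases hcases with h | h
        · have := inner_eq_norm_mul_iff_real.mp h
          -- ‖w‖ • u = ‖u‖ • w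
          have h2 : ⟪v, ‖u‖ • w⟫_ℝ = ⟪v, ‖w‖ • u⟫_ℝ := by rw [← this]
          rw [real_inner_smul_right, real_inner_smul_right, real_inner_comm u v, horth,
            mul_zero] at h2
          have := mul_eq_zero.mp h2
          rcases this with h3 | h3
          · exact absurd h3 (ne_of_gt hupos)
          · exact h3
        · have h' : ⟪u, -w⟫_ℝ = ‖u‖ * ‖-w‖ := by
            rw [inner_neg_right, norm_neg, h]; ring
          have := inner_eq_norm_mul_iff_real.mp h'
          have h2 : ⟪v, ‖u‖ • (-w)⟫_ℝ = ⟪v, ‖-w‖ • u⟫_ℝ := by rw [← this]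
          rw [real_inner_smul_right, real_inner_smul_right, real_inner_comm u v, horth,
            mul_zero, inner_neg_right] at h2
          have h3 : ‖u‖ * ⟪v, w⟫_ℝ = 0 := by linarith [h2]
          rcases mul_eq_zero.mp h3 with h4 | h4
          · exact absurd h4 (ne_of_gt hupos)
          · exact h4
      have hw0 : ‖w‖ = 0 := by
        rw [hvw] at sqv
        have h0 : (0:ℝ) = ‖u‖ ^ 2 * ‖w‖ ^ 2 := by simpa using sqv
        exact dzero_aux hupos (norm_nonneg w) h0
      have : w = 0 := norm_eq_zero.mp hw0
      have := sub_eq_zero.mp (by rw [← hw]; exact this)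
      exact this
    · intro hx
      rw [hx]
      constructor
      · have g1 : (o + u) - o = u := by abel
        have g2 : (o + v) - o = v := by abel
        rw [g1, g2, ← huv]; linarith
      · have g1 : (o - u) - o = -u := by abel
        have g2 : (o - v) - o = -v := by abel
        rw [g1, g2, norm_neg, norm_neg, ← huv]; linarith
end

section
/- Let p, q be distinct points, λ > √2, and o a point on the boundary of E_λ(pq). Then o does not lie in the disk with diameter pq; equivalently, ⟨p - o, q - o⟩ > 0, i.e., the angle ∠poq is strictly less than π/2. -/
open scoped InnerProductSpace

open EuclideanGeometry

theorem boundary_point_not_in_disk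
    (p q o : EuclideanSpace ℝ (Fin 2)) (hpq : p ≠ q) (lam : ℝ)
    (hlam : Real.sqrt 2 < lam)
    (ho : ‖p - o‖ + ‖q - o‖ = lam * ‖p - q‖) :
    ¬ (‖o - (1/2 : ℝ) • (p + q)‖ ≤ ‖p - q‖ / 2) ∧
    0 < ⟪p - o, q - o⟫_ℝ ∧ ∠ p o q < Real.pi / 2 := by
  have hc : (0:ℝ) < ‖p - q‖ := by
    rw [norm_pos_iff, sub_ne_zero]; exact hpq
  have hkey : ‖p - q‖^2 = ‖p - o‖^2 + ‖q - o‖^2 - 2 * ⟪p - o, q - o⟫_ℝ := by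
    have h1 : p - q = (p - o) - (q - o) := by abel
    rw [h1, norm_sub_sq_real]; ring
  have hsq : Real.sqrt 2 * ‖p - q‖ < ‖p - o‖ + ‖q - o‖ := by
    rw [ho]; exact mul_lt_mul_of_pos_right hlam hc
  have hs2 : Real.sqrt 2 ^ 2 = 2 := Real.sq_sqrt (by norm_num)
  have hs2n : (0:ℝ) ≤ Real.sqrt 2 := Real.sqrt_nonneg 2
  have h2 : 2 * ‖p - q‖^2 < (‖p - o‖ + ‖q - o‖)^2 := by
    nlinarith [mul_nonneg hs2n hc.le, norm_nonneg (p - o), norm_nonneg (q - o)]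
  have ht : 0 < ⟪p - o, q - o⟫_ℝ := by
    nlinarith [sq_nonneg (‖p - o‖ - ‖q - o‖)]
  have hpo : p - o ≠ 0 := by
    intro h; rw [h, inner_zero_left] at ht; exact lt_irrefl 0 ht
  have hqo : q - o ≠ 0 := by
    intro h; rw [h, inner_zero_right] at ht; exact lt_irrefl 0 ht
  refine ⟨?_, ht, ?_⟩
  · intro h
    have hm : o - (1/2 : ℝ) • (p + q) = (1/2 : ℝ) • ((o - p) + (o - q)) := by
      module
    have hnorm : ‖o - (1/2 : ℝ) • (p + q)‖ = (1/2) * ‖(o - p) + (o - q)‖ := by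
      rw [hm, norm_smul]; norm_num
    have hsum : ‖(o - p) + (o - q)‖^2
        = ‖p - o‖^2 + ‖q - o‖^2 + 2 * ⟪p - o, q - o⟫_ℝ := by
      rw [norm_add_sq_real]
      have e1 : o - p = -(p - o) := by abel
      have e2 : o - q = -(q - o) := by abel
      rw [e1, e2, norm_neg, norm_neg, inner_neg_neg]; ring
    have h' : ‖(o - p) + (o - q)‖ ≤ ‖p - q‖ := by
      rw [hnorm] at h; linarith
    have h'' : ‖(o - p) + (o - q)‖^2 ≤ ‖p - q‖^2 := by
      have := norm_nonneg ((o - p) + (o - q))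
      nlinarith
    nlinarith
  · have hang : ∠ p o q = Real.arccos (⟪p - o, q - o⟫_ℝ / (‖p - o‖ * ‖q - o‖)) := rfl
    rw [hang, Real.arccos_lt_pi_div_two]
    exact div_pos ht (mul_pos (norm_pos_iff.mpr hpo) (norm_pos_iff.mpr hqo))
end

section
/- Let A₁, A₂, A₃ be compact convex subsets of ℝ² that pairwise intersect but have empty common intersection, and for λ ≥ 1 let A_i^λ denote the corresponding scaled families E_λ(pᵢqᵢ) with A_i = E_√2(pᵢqᵢ). Then there exists a minimal λ* > √2 such that E_{λ*}(p₁q₁) ∩ E_{λ*}(p₂q₂) ∩ E_{λ*}(p₃q₃) is nonempty, and this intersection is a single point o; moreover o lies on the boundary of each E_{λ*}(pᵢqᵢ). -/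
set_option maxHeartbeats 1000000

lemma ellipse_strict {V : Type*} [NormedAddCommGroup V] [InnerProductSpace ℝ V]
    (P Q o o' : V) (c : ℝ) (hne : o ≠ o') (hd : ‖P - Q‖ < c)
    (h1 : ‖P - o‖ + ‖Q - o‖ ≤ c) (h2 : ‖P - o'‖ + ‖Q - o'‖ ≤ c) :
    ‖P - (2:ℝ)⁻¹ • (o + o')‖ + ‖Q - (2:ℝ)⁻¹ • (o + o')‖ < c := by
  by_contra hcon
  push_neg at hcon
  have hPm : P - (2:ℝ)⁻¹ • (o + o') = (2:ℝ)⁻¹ • ((P - o) + (P - o')) := by module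
  have hQm : Q - (2:ℝ)⁻¹ • (o + o') = (2:ℝ)⁻¹ • ((Q - o) + (Q - o')) := by module
  have hnP : ‖P - (2:ℝ)⁻¹ • (o + o')‖ = 2⁻¹ * ‖(P - o) + (P - o')‖ := by
    rw [hPm, norm_smul]; norm_num
  have hnQ : ‖Q - (2:ℝ)⁻¹ • (o + o')‖ = 2⁻¹ * ‖(Q - o) + (Q - o')‖ := by
    rw [hQm, norm_smul]; norm_num
  have nPa := norm_add_le (P - o) (P - o')
  have nQa := norm_add_le (Q - o) (Q - o')
  rw [hnP, hnQ] at hcon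
  have e1 : ‖(P - o) + (P - o')‖ = ‖P - o‖ + ‖P - o'‖ := by linarith
  have e2 : ‖(Q - o) + (Q - o')‖ = ‖Q - o‖ + ‖Q - o'‖ := by linarith
  have hc1 : ‖P - o‖ + ‖Q - o‖ = c := by linarith
  have hc2 : ‖P - o'‖ + ‖Q - o'‖ = c := by linarith
  have hPo : P - o ≠ 0 := by
    intro h
    rw [sub_eq_zero] at h
    have h' : Q - o = Q - P := by rw [h]
    rw [h, sub_self, norm_zero, h', norm_sub_rev, zero_add] at hc1
    rw [hc1] at hd; exact lt_irrefl _ hd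
  have hQo : Q - o ≠ 0 := by
    intro h
    rw [sub_eq_zero] at h
    have h' : P - o = P - Q := by rw [h]
    rw [h, sub_self, norm_zero, h', add_zero] at hc1
    rw [hc1] at hd; exact lt_irrefl _ hd
  have hPo' : P - o' ≠ 0 := by
    intro h
    rw [sub_eq_zero] at h
    have h' : Q - o' = Q - P := by rw [h]
    rw [h, sub_self, norm_zero, h', norm_sub_rev, zero_add] at hc2
    rw [hc2] at hd; exact lt_irrefl _ hd
  have hQo' : Q - o' ≠ 0 := by
    intro h
    rw [sub_eq_zero] at h
    have h' : P - o' = P - Q := by rw [h]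
    rw [h, sub_self, norm_zero, h', add_zero] at hc2
    rw [hc2] at hd; exact lt_irrefl _ hd
  have s1 : SameRay ℝ (P - o) (P - o') := sameRay_iff_norm_add.mpr e1
  have s2 : SameRay ℝ (Q - o) (Q - o') := sameRay_iff_norm_add.mpr e2
  obtain ⟨r, hr, hru⟩ := s1.exists_pos_left hPo hPo'
  obtain ⟨s, hs, hsv⟩ := s2.exists_pos_left hQo hQo'
  have ha2 : ‖P - o'‖ = r * ‖P - o‖ := by
    rw [← hru, norm_smul, Real.norm_eq_abs, abs_of_pos hr]
  have hb2 : ‖Q - o'‖ = s * ‖Q - o‖ := by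
    rw [← hsv, norm_smul, Real.norm_eq_abs, abs_of_pos hs]
  have h3 : r • (P - o) - s • (Q - o) = (P - o) - (Q - o) := by
    rw [hru, hsv]; module
  have hvec : (r - 1) • (P - o) = (s - 1) • (Q - o) := by
    have h4 : (r - 1) • (P - o) - (s - 1) • (Q - o)
        = (r • (P - o) - s • (Q - o)) - ((P - o) - (Q - o)) := by module
    rw [h3, sub_self] at h4
    exact sub_eq_zero.mp h4
  have ha1pos : (0:ℝ) < ‖P - o‖ := norm_pos_iff.mpr hPo
  have hb1pos : (0:ℝ) < ‖Q - o‖ := norm_pos_iff.mpr hQo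
  have hsc : (r - 1) * ‖P - o‖ = (1 - s) * ‖Q - o‖ := by
    have h5 : r * ‖P - o‖ + s * ‖Q - o‖ = c := by rw [← ha2, ← hb2]; exact hc2
    nlinarith [hc1]
  by_cases hs1 : s = 1
  · subst hs1
    simp only [sub_self, zero_smul] at hvec
    rcases smul_eq_zero.mp hvec with h | h
    · have hr1 : r = 1 := by linarith [sub_eq_zero.mp h, (by linarith : r - 1 = 0)]
      rw [hr1, one_smul, sub_right_inj] at hru
      exact hne hru
    · exact hPo h
  · have hs1' : s - 1 ≠ 0 := sub_ne_zero.mpr hs1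
    obtain ⟨k, hk⟩ : ∃ k : ℝ, k = (s - 1)⁻¹ * (r - 1) := ⟨_, rfl⟩
    have hQoe : Q - o = k • (P - o) := by
      have := congrArg (fun v => (s - 1)⁻¹ • v) hvec
      simp only [smul_smul] at this
      rw [inv_mul_cancel₀ hs1', one_smul] at this
      rw [← this, ← hk]
    have hrk : r - 1 = k * (s - 1) := by
      rw [hk]; field_simp
    have h5 : (s - 1) * (k * ‖P - o‖ + ‖Q - o‖) = 0 := by
      have hsc' := hsc
      rw [hrk] at hsc'
      linear_combination hsc'
    have hka : k * ‖P - o‖ = -‖Q - o‖ := by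
      rcases mul_eq_zero.mp h5 with h | h
      · exact absurd h hs1'
      · linarith
    have hk0 : k < 0 := by nlinarith
    have hPQ : P - Q = (1 - k) • (P - o) := by
      rw [show P - Q = (P - o) - (Q - o) by abel, hQoe]; module
    have hnPQ : ‖P - Q‖ = (1 - k) * ‖P - o‖ := by
      rw [hPQ, norm_smul, Real.norm_eq_abs, abs_of_pos (by linarith : (0:ℝ) < 1 - k)]
    have : c < c := by
      calc c = ‖P - o‖ + ‖Q - o‖ := hc1.symm
        _ = (1 - k) * ‖P - o‖ := by linarith [hka]
        _ = ‖P - Q‖ := hnPQ.symm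
        _ < c := hd
    exact lt_irrefl _ this

lemma seg_convex {V : Type*} [NormedAddCommGroup V] [NormedSpace ℝ V] (P o z : V) (t : ℝ)
    (ht0 : 0 ≤ t) (ht1 : t ≤ 1) :
    ‖P - (o + t • (z - o))‖ ≤ (1 - t) * ‖P - o‖ + t * ‖P - z‖ := by
  have h : P - (o + t • (z - o)) = (1 - t) • (P - o) + t • (P - z) := by module
  rw [h]
  calc ‖(1 - t) • (P - o) + t • (P - z)‖ ≤ ‖(1 - t) • (P - o)‖ + ‖t • (P - z)‖ :=
        norm_add_le _ _
    _ = (1 - t) * ‖P - o‖ + t * ‖P - z‖ := by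
        rw [norm_smul, norm_smul, Real.norm_eq_abs, Real.norm_eq_abs,
          abs_of_nonneg (by linarith), abs_of_nonneg ht0]

theorem minimal_inflation_single_point
    (p q : Fin 3 → EuclideanSpace ℝ (Fin 2)) (hpq : ∀ i, p i ≠ q i)
    (E : ℝ → Fin 3 → Set (EuclideanSpace ℝ (Fin 2)))
    (hE : ∀ l i, E l i = {x | ‖p i - x‖ + ‖q i - x‖ ≤ l * ‖p i - q i‖})
    (hpair : ∀ i j, i ≠ j → (E (Real.sqrt 2) i ∩ E (Real.sqrt 2) j).Nonempty)
    (hnotsub : ∀ i j, i ≠ j → ¬ E (Real.sqrt 2) i ⊆ E (Real.sqrt 2) j)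
    (hempty : (⋂ i, E (Real.sqrt 2) i) = ∅) :
    ∃ lam : ℝ, Real.sqrt 2 < lam ∧
      (∃ o : EuclideanSpace ℝ (Fin 2),
        (⋂ i, E lam i) = {o} ∧
        (∀ i, ‖p i - o‖ + ‖q i - o‖ = lam * ‖p i - q i‖)) ∧
      (∀ μ : ℝ, Real.sqrt 2 ≤ μ → μ < lam → (⋂ i, E μ i) = ∅) := by
  classical
  have hd : ∀ i, 0 < ‖p i - q i‖ := fun i => by
    rw [norm_pos_iff, sub_ne_zero]; exact hpq i
  set g : Fin 3 → EuclideanSpace ℝ (Fin 2) → ℝ := fun i x => ‖p i - x‖ + ‖q i - x‖ with hgdef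
  set F : EuclideanSpace ℝ (Fin 2) → ℝ := fun x =>
    max (max (g 0 x / ‖p 0 - q 0‖) (g 1 x / ‖p 1 - q 1‖)) (g 2 x / ‖p 2 - q 2‖) with hFdef
  have hFub : ∀ x i, g i x / ‖p i - q i‖ ≤ F x := by
    intro x i
    fin_cases i
    · exact le_trans (le_max_left _ _) (le_max_left _ _)
    · exact le_trans (le_max_right _ _) (le_max_left _ _)
    · exact le_max_right _ _
  have hFle : ∀ x l, F x ≤ l ↔ ∀ i, g i x ≤ l * ‖p i - q i‖ := by
    intro x l
    constructor
    · intro h i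
      rw [← div_le_iff₀ (hd i)]
      exact le_trans (hFub x i) h
    · intro h
      have h' : ∀ i, g i x / ‖p i - q i‖ ≤ l := fun i => (div_le_iff₀ (hd i)).mpr (h i)
      exact max_le (max_le (h' 0) (h' 1)) (h' 2)
  have hmem : ∀ x l, x ∈ ⋂ i, E l i ↔ F x ≤ l := by
    intro x l
    rw [Set.mem_iInter, hFle]
    constructor
    · intro h i; have := h i; rw [hE l i] at this; exact this
    · intro h i; rw [hE l i]; exact h i
  -- continuity
  have hgc : ∀ i, Continuous (g i) := by
    intro i
    exact ((continuous_const.sub continuous_id).norm).add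
      ((continuous_const.sub continuous_id).norm)
  have hFc : Continuous F := by
    exact (((hgc 0).div_const _).max ((hgc 1).div_const _)).max ((hgc 2).div_const _)
  -- minimizer
  set K : Set (EuclideanSpace ℝ (Fin 2)) := {x | F x ≤ F 0} with hKdef
  have hK0 : (0:EuclideanSpace ℝ (Fin 2)) ∈ K := by
    simp only [hKdef, Set.mem_setOf_eq]
    exact le_rfl
  have hKcl : IsClosed K := isClosed_le hFc continuous_const
  have hKsub : K ⊆ Metric.closedBall (p 0) (F 0 * ‖p 0 - q 0‖) := by
    intro x hx
    have h1 : g 0 x ≤ F 0 * ‖p 0 - q 0‖ := (hFle x (F 0)).mp hx 0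
    have h2 : ‖p 0 - x‖ ≤ g 0 x := by
      simp only [hgdef]
      have : (0:ℝ) ≤ ‖q 0 - x‖ := norm_nonneg _
      linarith
    rw [Metric.mem_closedBall, dist_comm, dist_eq_norm]
    exact le_trans h2 h1
  have hKcomp : IsCompact K :=
    (isCompact_closedBall _ _).of_isClosed_subset hKcl hKsub
  obtain ⟨o, hoK, hominOn⟩ := hKcomp.exists_isMinOn ⟨0, hK0⟩ hFc.continuousOn
  have homin : ∀ x ∈ K, F o ≤ F x := fun x hx => isMinOn_iff.mp hominOn x hx
  have hglob : ∀ x, F o ≤ F x := by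
    intro x
    by_cases hx : F x ≤ F 0
    · exact homin x hx
    · exact le_trans (homin 0 hK0) (le_of_not_ge hx)
  set lam := F o with hlam
  -- lam > sqrt 2
  have hsqrt2 : Real.sqrt 2 < lam := by
    by_contra h
    push_neg at h
    have : o ∈ ⋂ i, E (Real.sqrt 2) i := (hmem o _).mpr h
    rw [hempty] at this
    exact this
  have h1lam : (1:ℝ) < lam := by
    have : (1:ℝ) < Real.sqrt 2 := by
      rw [show (1:ℝ) = Real.sqrt 1 from (Real.sqrt_one).symm]
      exact Real.sqrt_lt_sqrt (by norm_num) (by norm_num)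
    linarith
  have hlamle : ∀ i, g i o ≤ lam * ‖p i - q i‖ := (hFle o lam).mp le_rfl
  -- all constraints active
  have hact : ∀ i, g i o = lam * ‖p i - q i‖ := by
    intro k
    by_contra hne
    have hlt : g k o < lam * ‖p k - q k‖ := lt_of_le_of_ne (hlamle k) hne
    obtain ⟨i, j, hij, hcov⟩ :
        ∃ i j : Fin 3, i ≠ j ∧ ∀ m : Fin 3, m = i ∨ m = j ∨ m = k := by
      fin_cases k
      · exact ⟨1, 2, by decide, by decide⟩
      · exact ⟨0, 2, by decide, by decide⟩
      · exact ⟨0, 1, by decide, by decide⟩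
    obtain ⟨z, hzi, hzj⟩ := hpair i j hij
    rw [hE] at hzi hzj
    have hgi : g i z ≤ Real.sqrt 2 * ‖p i - q i‖ := hzi
    have hgj : g j z ≤ Real.sqrt 2 * ‖p j - q j‖ := hzj
    set δ : ℝ := lam * ‖p k - q k‖ - g k o with hδ
    have hδpos : 0 < δ := by rw [hδ]; linarith
    set M : ℝ := |g k z - g k o| with hM
    have hMnn : (0:ℝ) ≤ M := abs_nonneg _
    set t : ℝ := min (1/2) (δ / (2 * (M + 1))) with ht
    have htpos : 0 < t := by
      apply lt_min (by norm_num)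
      positivity
    have htle : t ≤ 1 := le_trans (min_le_left _ _) (by norm_num)
    have htle2 : t ≤ δ / (2 * (M + 1)) := min_le_right _ _
    have htM : 2 * t * (M + 1) ≤ δ := by
      rw [div_eq_inv_mul] at htle2
      have h2M : (0:ℝ) < 2 * (M + 1) := by linarith
      calc 2 * t * (M + 1) = t * (2 * (M + 1)) := by ring
        _ ≤ (2 * (M + 1))⁻¹ * δ * (2 * (M + 1)) := by
            apply mul_le_mul_of_nonneg_right htle2 (le_of_lt h2M)
        _ = δ := by field_simp
    set x : EuclideanSpace ℝ (Fin 2) := o + t • (z - o) with hx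
    have hconv : ∀ m, g m x ≤ (1 - t) * g m o + t * g m z := by
      intro m
      have hP := seg_convex (p m) o z t (le_of_lt htpos) htle
      have hQ := seg_convex (q m) o z t (le_of_lt htpos) htle
      simp only [hgdef, hx]
      linarith
    have hlts : ∀ m, g m x < lam * ‖p m - q m‖ := by
      intro m
      rcases hcov m with rfl | rfl | rfl
      · calc g m x ≤ (1 - t) * g m o + t * g m z := hconv m
          _ ≤ (1 - t) * (lam * ‖p m - q m‖) + t * (Real.sqrt 2 * ‖p m - q m‖) := by
              have h1 := hlamle m
              have h2 : (0:ℝ) ≤ 1 - t := by linarith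
              nlinarith [hgi, mul_le_mul_of_nonneg_left (hlamle m) h2]
          _ < lam * ‖p m - q m‖ := by nlinarith [mul_pos (mul_pos htpos (hd m)) (sub_pos.mpr hsqrt2)]
      · calc g m x ≤ (1 - t) * g m o + t * g m z := hconv m
          _ ≤ (1 - t) * (lam * ‖p m - q m‖) + t * (Real.sqrt 2 * ‖p m - q m‖) := by
              have h2 : (0:ℝ) ≤ 1 - t := by linarith
              nlinarith [hgj, mul_le_mul_of_nonneg_left (hlamle m) h2]
          _ < lam * ‖p m - q m‖ := by nlinarith [mul_pos (mul_pos htpos (hd m)) (sub_pos.mpr hsqrt2)]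
      · have h6 : g m x ≤ g m o + t * (g m z - g m o) := by
          have := hconv m; nlinarith []
        have h7 : t * (g m z - g m o) ≤ t * M := by
          apply mul_le_mul_of_nonneg_left _ (le_of_lt htpos)
          rw [hM]; exact le_abs_self _
        have h8 : t * M < δ := by nlinarith
        rw [hδ] at h8
        linarith
    have hFx : F x < lam := by
      have := fun m => (div_lt_iff₀ (hd m)).mpr (hlts m)
      exact max_lt (max_lt (this 0) (this 1)) (this 2)
    exact absurd (hglob x) (not_le.mpr hFx)
  refine ⟨lam, hsqrt2, ⟨o, ?_, ?_⟩, ?_⟩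
  · -- intersection is {o}
    apply Set.eq_singleton_iff_unique_mem.mpr
    constructor
    · exact (hmem o lam).mpr le_rfl
    · intro x hxmem
      by_contra hxo
      have hxm : ∀ i, g i x ≤ lam * ‖p i - q i‖ := (hFle x lam).mp ((hmem x lam).mp hxmem)
      have hdlt : ∀ i, ‖p i - q i‖ < lam * ‖p i - q i‖ := by
        intro i
        nlinarith [hd i, h1lam]
      have hmid : ∀ i, g i ((2:ℝ)⁻¹ • (o + x)) < lam * ‖p i - q i‖ := by
        intro i
        exact ellipse_strict (p i) (q i) o x (lam * ‖p i - q i‖)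
          (fun h => hxo (h.symm)) (hdlt i) (hlamle i) (hxm i)
      have hFm : F ((2:ℝ)⁻¹ • (o + x)) < lam := by
        have := fun m => (div_lt_iff₀ (hd m)).mpr (hmid m)
        exact max_lt (max_lt (this 0) (this 1)) (this 2)
      exact absurd (hglob _) (not_le.mpr hFm)
  · intro i
    exact hact i
  · intro μ hμ1 hμ2
    rw [Set.eq_empty_iff_forall_notMem]
    intro x hx
    have : F x ≤ μ := (hmem x μ).mp hx
    have := hglob x
    linarith
end
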